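/- Let r(a,b) = (a⁶+1)(b²+1)² + (a⁵+a)(4b⁴−8b³−8b−4) + (a⁴+a²)(5b⁴−4b³+2b²+4b+5) + a³(4b⁴−4). Then r(a,b) > 0 for every b > 1 and every a ∈ S_b, where S_b = ((1+2b−b²)/(1+b²), (1+b²)/(1+2b−b²)) if 1 < b < 1+√2 and S_b = (0,∞) if b ≥ 1+√2. -/
import Mathlib


noncomputable def rPoly (a b : ℝ) : ℝ :=
  (a^6 + 1) * (b^2 + 1)^2 + (a^5 + a) * (4*b^4 - 8*b^3 - 8*b - 4)
    + (a^4 + a^2) * (5*b^4 - 4*b^3 + 2*b^2 + 4*b + 5) + a^3 * (4*b^4 - 4)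

noncomputable def Sb (b : ℝ) : Set ℝ :=
  if b < 1 + Real.sqrt 2 then
    Set.Ioo ((1 + 2*b - b^2) / (b^2 + 1)) ((b^2 + 1) / (1 + 2*b - b^2))
  else Set.Ioi 0

lemma rPoly_key (a b : ℝ) :
    rPoly a b = (b^2+1)^2*(a-1)^6 + 2*((b^2+1)*(5*b^2-4*b+1))*(a*(a-1)^4)
      + 2*(15*b^4-18*b^3+10*b^2-14*b-1)*(a^2*(a-1)^2)
      + 8*(b*(b-1)*(3*b^2+1))*a^3 := by
  unfold rPoly; ring

lemma rPoly_pos_of_A1_nonneg (a b : ℝ) (hb : 1 < b) (ha : 0 < a)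
    (hA1 : 0 ≤ 15*b^4-18*b^3+10*b^2-14*b-1) : 0 < rPoly a b := by
  rw [rPoly_key]
  have h5 : 0 < 5*b^2-4*b+1 := by nlinarith [sq_nonneg (2*b-1), sq_nonneg b]
  have h1 : 0 ≤ (b^2+1)^2*(a-1)^6 := by positivity
  have h2 : 0 ≤ 2*((b^2+1)*(5*b^2-4*b+1))*(a*(a-1)^4) := by
    have : (0:ℝ) < b^2+1 := by positivity
    have := mul_pos this h5
    have h4 : 0 ≤ a*(a-1)^4 := by positivity
    nlinarith [mul_nonneg (mul_pos (mul_pos (by positivity : (0:ℝ) < b^2+1) h5) two_pos).le h4]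
  have h3 : 0 ≤ 2*(15*b^4-18*b^3+10*b^2-14*b-1)*(a^2*(a-1)^2) := by
    have : 0 ≤ a^2*(a-1)^2 := by positivity
    nlinarith [mul_nonneg hA1 this]
  have h4 : 0 < 8*(b*(b-1)*(3*b^2+1))*a^3 := by
    have hb1 : 0 < b - 1 := by linarith
    have hb0 : 0 < b := by linarith
    have : (0:ℝ) < 3*b^2+1 := by positivity
    have := mul_pos (mul_pos hb0 hb1) this
    nlinarith [mul_pos this (pow_pos ha 3)]
  linarith

set_option maxHeartbeats 1000000 in
theorem rPoly_pos_on_good_region (a b : ℝ) (hb : 1 < b) (ha : a ∈ Sb b) :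
    0 < rPoly a b := by
  unfold Sb at ha
  split_ifs at ha with hlt
  · -- case 1 < b < 1 + √2
    obtain ⟨ha1, ha2⟩ := ha
    have hc : (0:ℝ) < b^2+1 := by positivity
    have hs2 : Real.sqrt 2 * Real.sqrt 2 = 2 := Real.mul_self_sqrt (by norm_num)
    have hs0 : 0 ≤ Real.sqrt 2 := Real.sqrt_nonneg 2
    have hw : 0 < 1+2*b-b^2 := by nlinarith [mul_self_lt_mul_self (by linarith : (0:ℝ) ≤ b-1) (by linarith : b-1 < Real.sqrt 2)]
    have ha0 : 0 < a := lt_trans (div_pos hw hc) ha1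
    have hwa : 1+2*b-b^2 < a*(b^2+1) := by
      have := (div_lt_iff₀ hc).mp ha1; linarith
    have hac : a*(1+2*b-b^2) < b^2+1 := by
      have := (lt_div_iff₀ hw).mp ha2; linarith
    have hneg : ((1+2*b-b^2)*a - (b^2+1)) * ((b^2+1)*a - (1+2*b-b^2)) < 0 :=
      mul_neg_of_neg_of_pos (by linarith) (by linarith)
    have hkey : (b^2+1)*(1+2*b-b^2)*(a-1)^2 < 4*a*b^2*(b-1)^2 := by nlinarith [hneg]
    rcases le_or_gt 0 (15*b^4-18*b^3+10*b^2-14*b-1) with hA | hA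
    · exact rPoly_pos_of_A1_nonneg a b hb ha0 hA
    · -- A1 < 0 : use the boundary bound
      have he : 0 < b - 1 := by linarith
      have hP : 0 < (3*b^2+1)*(b^2+1)*(1+2*b-b^2)
          + b*(b-1)*(15*b^4-18*b^3+10*b^2-14*b-1) := by
        nlinarith [pow_pos he 6, pow_pos he 5, pow_pos he 4, pow_pos he 3,
          pow_pos he 2, he]
      have hcoef : (15*b^4-18*b^3+10*b^2-14*b-1) * a^2 < 0 :=
        mul_neg_of_neg_of_pos hA (pow_pos ha0 2)
      have step := mul_lt_mul_of_neg_left hkey hcoef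
      have hlast : 0 < a^3 * (8*b*(b-1)*((3*b^2+1)*(b^2+1)*(1+2*b-b^2)
          + b*(b-1)*(15*b^4-18*b^3+10*b^2-14*b-1))) := by
        have hb0 : 0 < b := by linarith
        exact mul_pos (pow_pos ha0 3)
          (mul_pos (by nlinarith [mul_pos hb0 he] : (0:ℝ) < 8*b*(b-1)) hP)
      have hcw : 0 < (b^2+1)*(1+2*b-b^2) := mul_pos hc hw
      have h5 : 0 < 5*b^2-4*b+1 := by nlinarith [sq_nonneg (2*b-1), sq_nonneg b]
      have hn1 : 0 ≤ (b^2+1)*(1+2*b-b^2) * ((b^2+1)^2*(a-1)^6) :=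
        mul_nonneg hcw.le (by positivity)
      have hn2 : 0 ≤ (b^2+1)*(1+2*b-b^2) * (2*((b^2+1)*(5*b^2-4*b+1))*(a*(a-1)^4)) := by
        have : 0 ≤ 2*((b^2+1)*(5*b^2-4*b+1))*(a*(a-1)^4) := by
          have h4 : 0 ≤ a*(a-1)^4 := by positivity
          nlinarith [mul_nonneg (mul_pos (mul_pos hc h5) two_pos).le h4]
        exact mul_nonneg hcw.le this
      have hfinal : 0 < (b^2+1)*(1+2*b-b^2) * rPoly a b := by
        rw [rPoly_key]
        linarith [step, hlast, hn1, hn2]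
      by_contra h
      push_neg at h
      nlinarith [mul_nonpos_of_nonneg_of_nonpos hcw.le h, hfinal]
  · -- case b ≥ 1 + √2
    have ha0 : 0 < a := ha
    push_neg at hlt
    have hs2 : Real.sqrt 2 * Real.sqrt 2 = 2 := Real.mul_self_sqrt (by norm_num)
    have hs0 : 0 ≤ Real.sqrt 2 := Real.sqrt_nonneg 2
    have hb24 : (2.4:ℝ) ≤ b := by nlinarith
    have hA1 : 0 ≤ 15*b^4-18*b^3+10*b^2-14*b-1 := by
      nlinarith [pow_nonneg (by linarith : (0:ℝ) ≤ b - 2.4) 4,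
        pow_nonneg (by linarith : (0:ℝ) ≤ b - 2.4) 3,
        sq_nonneg (b - 2.4), (by linarith : (0:ℝ) ≤ b - 2.4)]
    exact rPoly_pos_of_A1_nonneg a b hb ha0 hA1
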